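/- arXiv:2510.10450 — 5 statements merged into one kernel-verified Lean document; each statement's English description precedes it below -/
import Mathlib

section
/- Let E be a real normed vector space, let κ > 0 and σ̃ ≥ 0, c̃ ≥ 0 be constants, and let α̲, ᾱ : [0,∞) → [0,∞) be continuous strictly increasing functions with α̲(0) = ᾱ(0) = 0 and α̲ a bijection of [0,∞) onto itself (class-K∞ functions). Let φ, ψ : [0,∞) → E be two curves and let W : [0,∞) → ℝ be differentiable with derivative W′(t) at every t ≥ 0. Assume that for all t ≥ 0 one has the sandwich bounds α̲(‖φ(t) − ψ(t)‖) ≤ W(t) ≤ ᾱ(‖φ(t) − ψ(t)‖) and the decay inequality W′(t) ≤ −κ·W(t) + σ̃ + c̃. Then for every t ≥ 0, ‖φ(t) − ψ(t)‖ ≤ α̲⁻¹(3·e^{−κt}·ᾱ(‖φ(0) − ψ(0)‖)) + α̲⁻¹(3·σ̃/κ) + α̲⁻¹(3·c̃/κ), where α̲⁻¹ denotes the inverse function of α̲. -/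
/-!
Along the two trajectories, `W' ≤ -κ W + (σ̃ + c̃)`, so Grönwall's inequality gives
`W t ≤ e^{-κt} W 0 + σ̃/κ + c̃/κ`. The sandwich bounds turn this into
`α̲ ‖φ t - ψ t‖ ≤ e^{-κt} ᾱ ‖φ 0 - ψ 0‖ + σ̃/κ + c̃/κ`; the largest of the three summands is at
least a third of the sum, and applying the monotone inverse `α̲⁻¹` to three times it bounds
`‖φ t - ψ t‖` by one of the three (nonnegative) terms of the estimate, hence by their sum.
-/

open Real Set

theorem gronwallBound_neg_le {δ κ ε : ℝ} (hκ : 0 < κ) (hε : 0 ≤ ε) (x : ℝ) :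
    gronwallBound δ (-κ) ε x ≤ exp (-κ * x) * δ + ε / κ := by
  rw [gronwallBound_of_K_ne_0 (neg_ne_zero.mpr hκ.ne'), div_neg]
  have : 0 ≤ ε / κ * exp (-κ * x) := by positivity
  linarith

theorem le_exp_mul_add_div_of_hasDerivAt_le {f f' : ℝ → ℝ} {κ ε : ℝ} (hκ : 0 < κ) (hε : 0 ≤ ε)
    (hf : ∀ t, 0 ≤ t → HasDerivAt f (f' t) t) (bound : ∀ t, 0 ≤ t → f' t ≤ -κ * f t + ε)
    {t : ℝ} (ht : 0 ≤ t) : f t ≤ exp (-κ * t) * f 0 + ε / κ := by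
  have hgronwall : f t ≤ gronwallBound (f 0) (-κ) ε (t - 0) :=
    le_gronwallBound_of_liminf_deriv_right_le
      (fun x hx => (hf x hx.1).continuousAt.continuousWithinAt)
      (fun x hx _ hr => (hf x hx.1).hasDerivWithinAt.liminf_right_slope_le hr) le_rfl
      (fun x hx => bound x hx.1) t ⟨ht, le_rfl⟩
  rw [sub_zero] at hgronwall
  exact hgronwall.trans (gronwallBound_neg_le hκ hε t)

section InverseOn

variable {α β : Type*} [LinearOrder α] [Preorder β] {f : α → β} {g : β → α} {s : Set α}
  {t : Set β}

theorem StrictMonoOn.le_of_le_of_leftInvOn (hf : StrictMonoOn f s) (hsurj : SurjOn f s t)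
    (hinv : LeftInvOn g f s) {x : α} {y : β} (hx : x ∈ s) (hy : y ∈ t) (h : f x ≤ y) :
    x ≤ g y := by
  obtain ⟨z, hz, rfl⟩ := hsurj hy
  rw [hinv hz]
  exact (hf.le_iff_le hx hz).mp h

end InverseOn

theorem le_inv_three_mul_add_add_of_le_add_add {f g : ℝ → ℝ} (hf : StrictMonoOn f (Ici 0))
    (hsurj : SurjOn f (Ici 0) (Ici 0)) (hinv : LeftInvOn g f (Ici 0)) {x a b c : ℝ} (hx : 0 ≤ x)
    (ha : 0 ≤ a) (hb : 0 ≤ b) (hc : 0 ≤ c) (h : f x ≤ a + b + c) :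
    x ≤ g (3 * a) + g (3 * b) + g (3 * c) := by
  have hg : MapsTo g (Ici 0) (Ici 0) := hinv.mapsTo hsurj
  have hga : 0 ≤ g (3 * a) := hg (by simp only [mem_Ici]; positivity)
  have hgb : 0 ≤ g (3 * b) := hg (by simp only [mem_Ici]; positivity)
  have hgc : 0 ≤ g (3 * c) := hg (by simp only [mem_Ici]; positivity)
  have hle (y : ℝ) (hy : 0 ≤ y) (hxy : f x ≤ y) : x ≤ g y :=
    hf.le_of_le_of_leftInvOn hsurj hinv hx hy hxy
  have hthird : f x ≤ 3 * a ∨ f x ≤ 3 * b ∨ f x ≤ 3 * c := by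
    by_contra! hlt
    linarith
  rcases hthird with h | h | h
  · linarith [hle _ (by positivity) h]
  · linarith [hle _ (by positivity) h]
  · linarith [hle _ (by positivity) h]

theorem deltaISpS_of_Lyapunov_general
    {E : Type*} [NormedAddCommGroup E]
    (κ σt ct : ℝ) (hκ : 0 < κ) (hσ : 0 ≤ σt) (hc : 0 ≤ ct)
    (uα oα αinv : ℝ → ℝ)
    -- `uα` (α̲) and `oα` (ᾱ) are class-K∞ functions on [0,∞)
    (huα_mono : StrictMonoOn uα (Ici 0))
    -- `uα` is a bijection of [0,∞) onto itself, with inverse `αinv`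
    (huα_bij : BijOn uα (Ici 0) (Ici 0))
    (hinv : InvOn αinv uα (Ici 0) (Ici 0))
    (φ ψ : ℝ → E) (W W' : ℝ → ℝ)
    (hW_deriv : ∀ t, 0 ≤ t → HasDerivAt W (W' t) t)
    (h_lower : ∀ t, 0 ≤ t → uα ‖φ t - ψ t‖ ≤ W t)
    (h_upper : ∀ t, 0 ≤ t → W t ≤ oα ‖φ t - ψ t‖)
    (h_decay : ∀ t, 0 ≤ t → W' t ≤ -κ * W t + σt + ct) :
    ∀ t, 0 ≤ t →
      ‖φ t - ψ t‖ ≤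
        αinv (3 * Real.exp (-κ * t) * oα ‖φ 0 - ψ 0‖) +
          αinv (3 * σt / κ) + αinv (3 * ct / κ) := by
  intro t ht
  have hW_le : W t ≤ exp (-κ * t) * W 0 + (σt + ct) / κ :=
    le_exp_mul_add_div_of_hasDerivAt_le hκ (by positivity) hW_deriv
      (fun s hs => by linarith [h_decay s hs]) ht
  have hW0 : 0 ≤ W 0 := (huα_bij.mapsTo (norm_nonneg (φ 0 - ψ 0))).out.trans (h_lower 0 le_rfl)
  have hsum : uα ‖φ t - ψ t‖ ≤ exp (-κ * t) * oα ‖φ 0 - ψ 0‖ + σt / κ + ct / κ := by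
    have := mul_le_mul_of_nonneg_left (h_upper 0 le_rfl) (exp_pos (-κ * t)).le
    rw [add_div] at hW_le
    linarith [h_lower t ht]
  have hbound := le_inv_three_mul_add_add_of_le_add_add huα_mono huα_bij.surjOn hinv.1 (norm_nonneg _)
    (mul_nonneg (exp_pos _).le (hW0.trans (h_upper 0 le_rfl))) (by positivity) (by positivity)
    hsum
  simpa only [mul_assoc, mul_div_assoc] using hbound

/-- Core of Theorem 1: a δ-ISpS Lyapunov function along a fixed pair of
trajectories yields the δ-ISpS estimate. -/
theorem deltaISpS_of_Lyapunov
    {E : Type*} [NormedAddCommGroup E] [NormedSpace ℝ E]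
    (κ σt ct : ℝ) (hκ : 0 < κ) (hσ : 0 ≤ σt) (hc : 0 ≤ ct)
    (uα oα αinv : ℝ → ℝ)
    -- `uα` (α̲) and `oα` (ᾱ) are class-K∞ functions on [0,∞)
    (huα_cont : ContinuousOn uα (Ici 0)) (huα_mono : StrictMonoOn uα (Ici 0))
    (huα_zero : uα 0 = 0)
    (hoα_cont : ContinuousOn oα (Ici 0)) (hoα_mono : StrictMonoOn oα (Ici 0))
    (hoα_zero : oα 0 = 0) (hoα_maps : MapsTo oα (Ici 0) (Ici 0))
    -- `uα` is a bijection of [0,∞) onto itself, with inverse `αinv`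
    (huα_bij : BijOn uα (Ici 0) (Ici 0))
    (hinv : InvOn αinv uα (Ici 0) (Ici 0))
    (φ ψ : ℝ → E) (W W' : ℝ → ℝ)
    (hW_deriv : ∀ t, 0 ≤ t → HasDerivAt W (W' t) t)
    (h_lower : ∀ t, 0 ≤ t → uα ‖φ t - ψ t‖ ≤ W t)
    (h_upper : ∀ t, 0 ≤ t → W t ≤ oα ‖φ t - ψ t‖)
    (h_decay : ∀ t, 0 ≤ t → W' t ≤ -κ * W t + σt + ct) :
    ∀ t, 0 ≤ t →
      ‖φ t - ψ t‖ ≤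
        αinv (3 * Real.exp (-κ * t) * oα ‖φ 0 - ψ 0‖) +
          αinv (3 * σt / κ) + αinv (3 * ct / κ) :=
  deltaISpS_of_Lyapunov_general κ σt ct hκ hσ hc uα oα αinv huα_mono huα_bij hinv φ ψ W W' hW_deriv
    h_lower h_upper h_decay
end

section
/- Let E be a real inner product space, let λ₁, λ₂ ∈ ℝ, D ≥ 0, let x₁, x₂, υ ∈ E, let hval ∈ ℝ, let α : ℝ → ℝ be any function, and let g₁, g₂ ∈ E with g₂ ≠ 0. Define φ₀ = ⟨g₁, x₂⟩ + ⟨g₂, −(λ₁ + λ₂)·x₂ − λ₁λ₂·x₁⟩ + α(hval). Let δ ∈ E satisfy ‖δ‖ ≤ D, and define the closed-loop acceleration a = δ − (λ₁ + λ₂)·x₂ − λ₁λ₂·x₁ + υ + max(0, −φ₀ − ⟨g₂, υ⟩)·g₂/‖g₂‖². Then ⟨g₁, x₂⟩ + ⟨g₂, a⟩ + α(hval) ≥ −D·‖g₂‖. -/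
open scoped RealInnerProductSpace

/-- Pointwise control-barrier-function inequality for the feedback-linearizing
control law with ReLU safety filter: ḣ + α(h) ≥ −D‖∇_{x₂}h‖. -/
theorem cbf_pointwise_inequality
    {E : Type*} [NormedAddCommGroup E] [InnerProductSpace ℝ E]
    (l₁ l₂ D : ℝ) (hD : 0 ≤ D)
    (x₁ x₂ υ : E) (hval : ℝ) (α : ℝ → ℝ)
    (g₁ g₂ : E) (hg₂ : g₂ ≠ 0)
    (φ₀ : ℝ) (hφ₀ : φ₀ = ⟪g₁, x₂⟫ + ⟪g₂, -(l₁ + l₂) • x₂ - (l₁ * l₂) • x₁⟫ + α hval)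
    (δ : E) (hδ : ‖δ‖ ≤ D)
    (a : E)
    (ha : a = δ - (l₁ + l₂) • x₂ - (l₁ * l₂) • x₁ + υ
      + (max 0 (-φ₀ - ⟪g₂, υ⟫) / ‖g₂‖ ^ 2) • g₂) :
    ⟪g₁, x₂⟫ + ⟪g₂, a⟫ + α hval ≥ -(D * ‖g₂‖) := by
  have hn : ‖g₂‖ ^ 2 ≠ 0 := by simp [pow_eq_zero_iff, norm_eq_zero, hg₂]
  have hinner : ⟪g₂, a⟫ = ⟪g₂, δ⟫ + ⟪g₂, -(l₁ + l₂) • x₂ - (l₁ * l₂) • x₁⟫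
      + ⟪g₂, υ⟫ + max 0 (-φ₀ - ⟪g₂, υ⟫) := by
    rw [ha]
    have : a = (δ - (l₁ + l₂) • x₂ - (l₁ * l₂) • x₁) + υ
        + (max 0 (-φ₀ - ⟪g₂, υ⟫) / ‖g₂‖ ^ 2) • g₂ := by rw [ha]
    rw [inner_add_right, inner_add_right, real_inner_smul_right,
      real_inner_self_eq_norm_sq]
    have h1 : ⟪g₂, δ - (l₁ + l₂) • x₂ - (l₁ * l₂) • x₁⟫
        = ⟪g₂, δ⟫ + ⟪g₂, -(l₁ + l₂) • x₂ - (l₁ * l₂) • x₁⟫ := by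
      rw [show δ - (l₁ + l₂) • x₂ - (l₁ * l₂) • x₁
            = δ + (-(l₁ + l₂) • x₂ - (l₁ * l₂) • x₁) by
          module]
      rw [inner_add_right]
    rw [h1]
    field_simp
  have hδ' : ⟪g₂, δ⟫ ≥ -(D * ‖g₂‖) := by
    have := abs_real_inner_le_norm g₂ δ
    have h2 : -(‖g₂‖ * ‖δ‖) ≤ ⟪g₂, δ⟫ := neg_le_of_abs_le this
    nlinarith [norm_nonneg g₂]
  have key : φ₀ + ⟪g₂, υ⟫ + max 0 (-φ₀ - ⟪g₂, υ⟫) ≥ 0 := by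
    rcases le_max_iff.mp (le_refl (max 0 (-φ₀ - ⟪g₂, υ⟫))) with _ | _ <;>
      cases le_total 0 (-φ₀ - ⟪g₂, υ⟫) with
      | inl h => rw [max_eq_right h]; linarith
      | inr h => rw [max_eq_left h]; linarith
  have : ⟪g₁, x₂⟫ + ⟪g₂, a⟫ + α hval
      = ⟪g₂, δ⟫ + (φ₀ + ⟪g₂, υ⟫ + max 0 (-φ₀ - ⟪g₂, υ⟫)) := by
    rw [hinner, hφ₀]; ring
  linarith
end

section
/- Let E be a real inner product space, let θ > 0, λ₁ > 1/2, λ₂ > 2 + 1/(2θ), D ≥ 0, R ≥ 0, and set κ = 2·min(λ₁ − 1/2, λ₂ − 2 − 1/(2θ)). Let x₁, x₂, y₁, y₂ : ℝ → E be curves and δ₁, δ₂, r₁, r₂, υ, υ′ : ℝ → E be functions with ‖δ₁(t)‖ ≤ D, ‖δ₂(t)‖ ≤ D, ‖r₁(t)‖ ≤ R, ‖r₂(t)‖ ≤ R for all t. Suppose at a time t the curves are differentiable with x₁′(t) = x₂(t), x₂′(t) = δ₁(t) − (λ₁ + λ₂)·x₂(t) − λ₁λ₂·x₁(t) + υ(t)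 + r₁(t), y₁′(t) = y₂(t), y₂′(t) = δ₂(t) − (λ₁ + λ₂)·y₂(t) − λ₁λ₂·y₁(t) + υ′(t) + r₂(t). Define W(s) = (1/2)‖x₁(s) − y₁(s)‖² + (1/2)‖x₂(s) + λ₁x₁(s) − y₂(s) − λ₁y₁(s)‖². Then W is differentiable at t and W′(t) ≤ −κ·W(t) + (1/2)‖υ(t) − υ′(t)‖² + D² + 2θ·R². -/
/-!
In the backstepping coordinates `e₁ = x₁ - y₁`, `e₂ = (x₂ + λ₁x₁) - (y₂ + λ₁y₁)` the difference of
the two closed loops is `e₁' = e₂ - λ₁e₁`, `e₂' = Δδ + Δυ + Δr - λ₂e₂`, and `W = ½‖e₁‖² + ½‖e₂‖²`.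
Hence `W' = ⟪e₁, e₂⟫ - λ₁‖e₁‖² + ⟪e₂, Δδ + Δυ + Δr⟫ - λ₂‖e₂‖²`, and Young's inequality applied to
each cross term, with weights chosen so that the disturbance terms cost exactly `D²`, `½‖Δυ‖²`
and `2θR²`, leaves `-(λ₁ - ½)‖e₁‖² - (λ₂ - 2 - 1/(2θ))‖e₂‖² ≤ -κW`.
-/

open scoped RealInnerProductSpace

section

variable {F : Type*} [NormedAddCommGroup F] [InnerProductSpace ℝ F]

theorem real_inner_le_young {ε : ℝ} (hε : 0 < ε) (u v : F) :
    ⟪u, v⟫ ≤ ε / 2 * ‖u‖ ^ 2 + 1 / (2 * ε) * ‖v‖ ^ 2 := by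
  have amgm : 2 * ε * (‖u‖ * ‖v‖) ≤ ε ^ 2 * ‖u‖ ^ 2 + ‖v‖ ^ 2 := by
    nlinarith [sq_nonneg (ε * ‖u‖ - ‖v‖)]
  calc ⟪u, v⟫ ≤ ‖u‖ * ‖v‖ := real_inner_le_norm u v
    _ ≤ ε / 2 * ‖u‖ ^ 2 + 1 / (2 * ε) * ‖v‖ ^ 2 := by
      rw [← mul_le_mul_iff_of_pos_left (by positivity : 0 < 2 * ε)]
      field_simp
      linarith

theorem HasDerivAt.half_norm_sq {f : ℝ → F} {f' : F} {x : ℝ} (hf : HasDerivAt f f' x) :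
    HasDerivAt (fun s => 1 / 2 * ‖f s‖ ^ 2) ⟪f x, f'⟫ x :=
  (hf.norm_sq.const_mul (1 / 2)).congr_deriv (by ring)

end

section

variable {E : Type*} [NormedAddCommGroup E] [InnerProductSpace ℝ E]
  {x₁ x₂ y₁ y₂ : ℝ → E} {l₁ l₂ t : ℝ}

theorem hasDerivAt_error_fst (hx₁ : HasDerivAt x₁ (x₂ t) t) (hy₁ : HasDerivAt y₁ (y₂ t) t) :
    HasDerivAt (fun s => x₁ s - y₁ s)
      ((x₂ t + l₁ • x₁ t - y₂ t - l₁ • y₁ t) - l₁ • (x₁ t - y₁ t)) t :=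
  (hx₁.sub hy₁).congr_deriv (by module)

theorem hasDerivAt_error_snd {δ₁ δ₂ u₁ u₂ r₁ r₂ : E}
    (hx₁ : HasDerivAt x₁ (x₂ t) t)
    (hx₂ : HasDerivAt x₂ (δ₁ - (l₁ + l₂) • x₂ t - (l₁ * l₂) • x₁ t + u₁ + r₁) t)
    (hy₁ : HasDerivAt y₁ (y₂ t) t)
    (hy₂ : HasDerivAt y₂ (δ₂ - (l₁ + l₂) • y₂ t - (l₁ * l₂) • y₁ t + u₂ + r₂) t) :
    HasDerivAt (fun s => x₂ s + l₁ • x₁ s - y₂ s - l₁ • y₁ s)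
      ((δ₁ - δ₂) + (u₁ - u₂) + (r₁ - r₂) - l₂ • (x₂ t + l₁ • x₁ t - y₂ t - l₁ • y₁ t)) t :=
  (((hx₂.add (hx₁.const_smul l₁)).sub hy₂).sub (hy₁.const_smul l₁)).congr_deriv (by module)

theorem lyapunov_rate_le {a b d u r : E} {θ D R κ : ℝ} (hθ : 0 < θ)
    (hd : ‖d‖ ≤ 2 * D) (hr : ‖r‖ ≤ 2 * R)
    (hκ : κ ≤ 2 * min (l₁ - 1 / 2) (l₂ - 2 - 1 / (2 * θ))) :
    ⟪a, b - l₁ • a⟫ + ⟪b, d + u + r - l₂ • b⟫ ≤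
      -κ * (1 / 2 * ‖a‖ ^ 2 + 1 / 2 * ‖b‖ ^ 2) + 1 / 2 * ‖u‖ ^ 2 + D ^ 2 + 2 * θ * R ^ 2 := by
  have hab := real_inner_le_young one_pos a b
  have hbd := real_inner_le_young two_pos b d
  have hbu := real_inner_le_young one_pos b u
  have hbr := real_inner_comm b r ▸ real_inner_le_young hθ r b
  norm_num at hab hbd hbu
  have hd2 : ‖d‖ ^ 2 ≤ (2 * D) ^ 2 := pow_le_pow_left₀ (norm_nonneg d) hd 2
  have hr2 : θ / 2 * ‖r‖ ^ 2 ≤ θ / 2 * (2 * R) ^ 2 :=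
    mul_le_mul_of_nonneg_left (pow_le_pow_left₀ (norm_nonneg r) hr 2) (by positivity)
  have hκ₁ := mul_le_mul_of_nonneg_right (hκ.trans (by simp) : κ ≤ 2 * (l₁ - 1 / 2))
    (sq_nonneg ‖a‖)
  have hκ₂ := mul_le_mul_of_nonneg_right
    (hκ.trans (by simp) : κ ≤ 2 * (l₂ - 2 - 1 / (2 * θ))) (sq_nonneg ‖b‖)
  simp only [inner_sub_right, inner_add_right, real_inner_smul_right,
    real_inner_self_eq_norm_sq]
  linarith

end

theorem lyapunov_decay_step_general
    {E : Type*} [NormedAddCommGroup E] [InnerProductSpace ℝ E]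
    (θ l₁ l₂ D R κ : ℝ) (hθ : 0 < θ)
    (hκ : κ = 2 * min (l₁ - 1 / 2) (l₂ - 2 - 1 / (2 * θ)))
    (x₁ x₂ y₁ y₂ δ₁ δ₂ r₁ r₂ υ υ' : ℝ → E)
    (hδ₁ : ∀ t, ‖δ₁ t‖ ≤ D) (hδ₂ : ∀ t, ‖δ₂ t‖ ≤ D)
    (hr₁ : ∀ t, ‖r₁ t‖ ≤ R) (hr₂ : ∀ t, ‖r₂ t‖ ≤ R)
    (t : ℝ)
    (hx₁ : HasDerivAt x₁ (x₂ t) t)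
    (hx₂ : HasDerivAt x₂
      (δ₁ t - (l₁ + l₂) • x₂ t - (l₁ * l₂) • x₁ t + υ t + r₁ t) t)
    (hy₁ : HasDerivAt y₁ (y₂ t) t)
    (hy₂ : HasDerivAt y₂
      (δ₂ t - (l₁ + l₂) • y₂ t - (l₁ * l₂) • y₁ t + υ' t + r₂ t) t)
    (W : ℝ → ℝ)
    (hW : W = fun s => (1 / 2) * ‖x₁ s - y₁ s‖ ^ 2
      + (1 / 2) * ‖x₂ s + l₁ • x₁ s - y₂ s - l₁ • y₁ s‖ ^ 2) :
    ∃ w : ℝ, HasDerivAt W w t ∧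
      w ≤ -κ * W t + (1 / 2) * ‖υ t - υ' t‖ ^ 2 + D ^ 2 + 2 * θ * R ^ 2 := by
  subst hW
  have hδ : ‖δ₁ t - δ₂ t‖ ≤ 2 * D := two_mul D ▸ norm_sub_le_of_le (hδ₁ t) (hδ₂ t)
  have hr : ‖r₁ t - r₂ t‖ ≤ 2 * R := two_mul R ▸ norm_sub_le_of_le (hr₁ t) (hr₂ t)
  exact ⟨_, (hasDerivAt_error_fst (l₁ := l₁) hx₁ hy₁).half_norm_sq.add
    (hasDerivAt_error_snd hx₁ hx₂ hy₁ hy₂).half_norm_sq, lyapunov_rate_le hθ hδ hr hκ.le⟩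

/-- Lyapunov-decay step of Theorem 2: along the closed-loop error dynamics
the Lyapunov function W satisfies W′ ≤ −κW + ½‖υ−υ′‖² + D² + 2θR². -/
theorem lyapunov_decay_step
    {E : Type*} [NormedAddCommGroup E] [InnerProductSpace ℝ E]
    (θ l₁ l₂ D R κ : ℝ) (hθ : 0 < θ) (hl₁ : 1 / 2 < l₁)
    (hl₂ : 2 + 1 / (2 * θ) < l₂) (hD : 0 ≤ D) (hR : 0 ≤ R)
    (hκ : κ = 2 * min (l₁ - 1 / 2) (l₂ - 2 - 1 / (2 * θ)))
    (x₁ x₂ y₁ y₂ δ₁ δ₂ r₁ r₂ υ υ' : ℝ → E)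
    (hδ₁ : ∀ t, ‖δ₁ t‖ ≤ D) (hδ₂ : ∀ t, ‖δ₂ t‖ ≤ D)
    (hr₁ : ∀ t, ‖r₁ t‖ ≤ R) (hr₂ : ∀ t, ‖r₂ t‖ ≤ R)
    (t : ℝ)
    (hx₁ : HasDerivAt x₁ (x₂ t) t)
    (hx₂ : HasDerivAt x₂
      (δ₁ t - (l₁ + l₂) • x₂ t - (l₁ * l₂) • x₁ t + υ t + r₁ t) t)
    (hy₁ : HasDerivAt y₁ (y₂ t) t)
    (hy₂ : HasDerivAt y₂
      (δ₂ t - (l₁ + l₂) • y₂ t - (l₁ * l₂) • y₁ t + υ' t + r₂ t) t)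
    (W : ℝ → ℝ)
    (hW : W = fun s => (1 / 2) * ‖x₁ s - y₁ s‖ ^ 2
      + (1 / 2) * ‖x₂ s + l₁ • x₁ s - y₂ s - l₁ • y₁ s‖ ^ 2) :
    ∃ w : ℝ, HasDerivAt W w t ∧
      w ≤ -κ * W t + (1 / 2) * ‖υ t - υ' t‖ ^ 2 + D ^ 2 + 2 * θ * R ^ 2 :=
  lyapunov_decay_step_general θ l₁ l₂ D R κ hθ hκ x₁ x₂ y₁ y₂ δ₁ δ₂ r₁ r₂ υ υ' hδ₁ hδ₂ hr₁ hr₂ t hx₁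
    hx₂ hy₁ hy₂ W hW
end

section
/- Let E be a real inner product space, let θ > 0, λ₁ > 1/2, λ₂ > 2 + 1/(2θ), D ≥ 0, R ≥ 0, D_υ ≥ 0, and set κ = 2·min(λ₁ − 1/2, λ₂ − 2 − 1/(2θ)), c̃ = D² + 2θR², and μ = (2 + λ₁² − λ₁√(λ₁² + 4))/4. Let x₁, x₂, y₁, y₂ : [0,∞) → E be differentiable curves and δ₁, δ₂, r₁, r₂, υ, υ′ : [0,∞) → E be functions with ‖δ₁(t)‖ ≤ D, ‖δ₂(t)‖ ≤ D, ‖r₁(t)‖ ≤ R, ‖r₂(t)‖ ≤ R, and ‖υ(t) − υ′(t)‖ ≤ D_υ for all t ≥ 0, such that for all t ≥ 0: x₁′(t) = x₂(t), x₂′(t) = δ₁(t) − (λ₁ + λ₂)x₂(t) − λ₁λ₂x₁(t) + υ(t) + r₁(t), y₁′(t) = y₂(t), y₂′(t) = δ₂(t) − (λ₁ + λ₂)y₂(t) − λ₁λ₂y₁(t) + υ′(t) + r₂(t). Define W(t) = (1/2)‖x₁(t) − y₁(t)‖² + (1/2)‖x₂(t) + λ₁x₁(t) − y₂(t) − λ₁y₁(t)‖².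 Then for all t ≥ 0: (a) W(t) ≤ e^{−κt}·W(0) + ((1/2)D_υ² + c̃)/κ, and (b) ‖x₁(t) − y₁(t)‖² + ‖x₂(t) − y₂(t)‖² ≤ (1/μ)·(e^{−κt}·W(0) + ((1/2)D_υ² + c̃)/κ). -/
open scoped RealInnerProductSpace Topology

/-!
Along the two trajectories the errors `e₁ = x₁ - y₁` and `e₂ = x₂ + λ₁x₁ - y₂ - λ₁y₁` obey
`e₁' = e₂ - λ₁e₁` and `e₂' = (δ₁ - δ₂) + (υ - υ') + (r₁ - r₂) - λ₂e₂`, so `W = ½‖e₁‖² + ½‖e₂‖²`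
has derivative `⟪e₁, e₁'⟫ + ⟪e₂, e₂'⟫`. Cauchy–Schwarz and Young's inequality, with weights
chosen so that the disturbances cost `D² + ½D_υ² + 2θR²`, give `W' ≤ -κW + ½D_υ² + c̃`, and
Grönwall's inequality yields (a). For (b), `W` is a positive definite quadratic form in
`(x₁ - y₁, x₂ - y₂)` whose smallest eigenvalue is `μ`.
-/

theorem le_exp_neg_mul_add_div_of_hasDerivAt_le {f : ℝ → ℝ} {κ ε t : ℝ} (hκ : 0 < κ)
    (hε : 0 ≤ ε) (hf : ∀ s, 0 ≤ s → ∃ f', HasDerivAt f f' s ∧ f' ≤ -κ * f s + ε)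
    (ht : 0 ≤ t) : f t ≤ Real.exp (-κ * t) * f 0 + ε / κ := by
  choose! f' hf' hbound using hf
  have hslope : ∀ x ∈ Set.Ico 0 t, ∀ r, f' x < r →
      ∃ᶠ z in 𝓝[>] x, (z - x)⁻¹ * (f z - f x) < r := fun x hx r hr => by
    simpa [slope_def_field, div_eq_inv_mul] using
      (hf' x hx.1).hasDerivWithinAt.liminf_right_slope_le hr
  have hgron := le_gronwallBound_of_liminf_deriv_right_le
    (fun s hs => (hf' s hs.1).continuousAt.continuousWithinAt) hslope le_rfl
    (fun s hs => hbound s hs.1) t ⟨ht, le_rfl⟩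
  rw [sub_zero, gronwallBound_of_K_ne_0 (neg_ne_zero.2 hκ.ne')] at hgron
  have hdecay : ε / -κ * (Real.exp (-κ * t) - 1) ≤ ε / κ := by
    rw [div_neg, neg_mul, ← mul_neg, neg_sub]
    exact mul_le_of_le_one_right (div_nonneg hε hκ.le) (by linarith [Real.exp_pos (-κ * t)])
  linarith

section
variable {E : Type*} [NormedAddCommGroup E] [InnerProductSpace ℝ E]

theorem real_inner_le_mul_norm_sq_add {c : ℝ} (hc : 0 < c) (u v : E) :
    ⟪u, v⟫ ≤ c / 2 * ‖u‖ ^ 2 + ‖v‖ ^ 2 / (2 * c) := by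
  have hyoung : 2 * c * (‖u‖ * ‖v‖) ≤ c ^ 2 * ‖u‖ ^ 2 + ‖v‖ ^ 2 := by
    nlinarith [sq_nonneg (c * ‖u‖ - ‖v‖)]
  calc ⟪u, v⟫ ≤ ‖u‖ * ‖v‖ := real_inner_le_norm u v
    _ ≤ c / 2 * ‖u‖ ^ 2 + ‖v‖ ^ 2 / (2 * c) := by
      rw [div_mul_eq_mul_div, div_add_div _ _ two_ne_zero (by positivity),
        le_div_iff₀ (by positivity)]
      nlinarith

theorem lyapunov_deriv_le {θ A B C : ℝ} (hθ : 0 < θ) (l₁ l₂ : ℝ) (e₁ e₂ : E) {a b c : E}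
    (ha : ‖a‖ ≤ A) (hb : ‖b‖ ≤ B) (hc : ‖c‖ ≤ C) :
    ⟪e₁, e₂ - l₁ • e₁⟫ + ⟪e₂, a + b + c - l₂ • e₂⟫ ≤
      -(l₁ - 1 / 2) * ‖e₁‖ ^ 2 - (l₂ - 2 - 1 / (2 * θ)) * ‖e₂‖ ^ 2
        + (A ^ 2 / 4 + B ^ 2 / 2 + θ * C ^ 2 / 2) := by
  have h₁ := real_inner_le_mul_norm_sq_add one_pos e₁ e₂
  have ha' := real_inner_le_mul_norm_sq_add two_pos e₂ a
  have hb' := real_inner_le_mul_norm_sq_add one_pos e₂ b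
  have hc' := real_inner_le_mul_norm_sq_add (inv_pos.2 hθ) e₂ c
  have hA : ‖a‖ ^ 2 ≤ A ^ 2 := pow_le_pow_left₀ (norm_nonneg a) ha 2
  have hB : ‖b‖ ^ 2 ≤ B ^ 2 := pow_le_pow_left₀ (norm_nonneg b) hb 2
  have hC : ‖c‖ ^ 2 ≤ C ^ 2 := pow_le_pow_left₀ (norm_nonneg c) hc 2
  simp only [inner_sub_right, inner_add_right, real_inner_smul_right, real_inner_self_eq_norm_sq]
  field_simp at hc' ⊢
  nlinarith

theorem hasDerivAt_lyapunov {l₁ l₂ s : ℝ} {x₁ x₂ y₁ y₂ : ℝ → E} {δ δ' v v' r r' : E}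
    (hx₁ : HasDerivAt x₁ (x₂ s) s)
    (hx₂ : HasDerivAt x₂ (δ - (l₁ + l₂) • x₂ s - (l₁ * l₂) • x₁ s + v + r) s)
    (hy₁ : HasDerivAt y₁ (y₂ s) s)
    (hy₂ : HasDerivAt y₂ (δ' - (l₁ + l₂) • y₂ s - (l₁ * l₂) • y₁ s + v' + r') s) :
    HasDerivAt (fun t => 1 / 2 * ‖x₁ t - y₁ t‖ ^ 2
        + 1 / 2 * ‖x₂ t + l₁ • x₁ t - y₂ t - l₁ • y₁ t‖ ^ 2)
      (⟪x₁ s - y₁ s, (x₂ s + l₁ • x₁ s - y₂ s - l₁ • y₁ s) - l₁ • (x₁ s - y₁ s)⟫ +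
        ⟪x₂ s + l₁ • x₁ s - y₂ s - l₁ • y₁ s,
          (δ - δ') + (v - v') + (r - r') - l₂ • (x₂ s + l₁ • x₁ s - y₂ s - l₁ • y₁ s)⟫) s := by
  have he₁ : HasDerivAt (fun t => x₁ t - y₁ t)
      ((x₂ s + l₁ • x₁ s - y₂ s - l₁ • y₁ s) - l₁ • (x₁ s - y₁ s)) s :=
    (hx₁.sub hy₁).congr_deriv (by module)
  have he₂ : HasDerivAt (fun t => x₂ t + l₁ • x₁ t - y₂ t - l₁ • y₁ t)
      ((δ - δ') + (v - v') + (r - r') - l₂ • (x₂ s + l₁ • x₁ s - y₂ s - l₁ • y₁ s)) s :=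
    (((hx₂.add (hx₁.const_smul l₁)).sub hy₂).sub (hy₁.const_smul l₁)).congr_deriv (by module)
  exact ((he₁.norm_sq.const_mul (1 / 2)).add (he₂.norm_sq.const_mul (1 / 2))).congr_deriv
    (by ring)

/-- The smallest eigenvalue of `½ [[1 + l², l], [l, 1]]`, the matrix of `W` in the
coordinates `(x₁ - y₁, x₂ - y₂)`. -/
noncomputable def lyapunovConst (l : ℝ) : ℝ := (2 + l ^ 2 - l * √(l ^ 2 + 4)) / 4

theorem lyapunovConst_pos (l : ℝ) : 0 < lyapunovConst l := by
  have hs : √(l ^ 2 + 4) ^ 2 = l ^ 2 + 4 := Real.sq_sqrt (by positivity)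
  have hprod : (2 + l ^ 2 - l * √(l ^ 2 + 4)) * (2 + l ^ 2 + l * √(l ^ 2 + 4)) = 4 := by
    linear_combination (-l ^ 2) * hs
  unfold lyapunovConst
  nlinarith [sq_nonneg l]

theorem lyapunovConst_mul_le {l : ℝ} (hl : 0 ≤ l) (u v : E) :
    lyapunovConst l * (‖u‖ ^ 2 + ‖v‖ ^ 2) ≤ 1 / 2 * ‖u‖ ^ 2 + 1 / 2 * ‖v + l • u‖ ^ 2 := by
  set s := √(l ^ 2 + 4)
  have hs : s ^ 2 = l ^ 2 + 4 := Real.sq_sqrt (by positivity)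
  have hsl : 0 < s + l := by
    have : 0 < s := Real.sqrt_pos.2 (by positivity)
    linarith
  have hsquare : (s + l) * ((s + l) * ‖u‖ ^ 2 - 4 * (‖u‖ * ‖v‖) + (s - l) * ‖v‖ ^ 2)
      = ((s + l) * ‖u‖ - 2 * ‖v‖) ^ 2 := by
    linear_combination ‖v‖ ^ 2 * hs
  have hform : 0 ≤ (s + l) * ‖u‖ ^ 2 - 4 * (‖u‖ * ‖v‖) + (s - l) * ‖v‖ ^ 2 :=
    nonneg_of_mul_nonneg_right (hsquare ▸ sq_nonneg _) hsl
  have hinner : -(‖v‖ * ‖u‖) ≤ ⟪v, u⟫ := (abs_le.1 (abs_real_inner_le_norm v u)).1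
  rw [norm_add_sq_real, real_inner_smul_right, norm_smul, mul_pow, Real.norm_eq_abs, sq_abs,
    lyapunovConst]
  nlinarith [mul_nonneg hl hform, mul_le_mul_of_nonneg_left hinner hl]
end

theorem deltaISpS_trajectory_estimate_general
    {E : Type*} [NormedAddCommGroup E] [InnerProductSpace ℝ E]
    (θ l₁ l₂ D R Dυ κ ct μ : ℝ)
    (hθ : 0 < θ) (hl₁ : 1 / 2 < l₁) (hl₂ : 2 + 1 / (2 * θ) < l₂)
    (hκ : κ = 2 * min (l₁ - 1 / 2) (l₂ - 2 - 1 / (2 * θ)))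
    (hct : ct = D ^ 2 + 2 * θ * R ^ 2)
    (hμ : μ = (2 + l₁ ^ 2 - l₁ * Real.sqrt (l₁ ^ 2 + 4)) / 4)
    (x₁ x₂ y₁ y₂ δ₁ δ₂ r₁ r₂ υ υ' : ℝ → E)
    (hδ₁ : ∀ t, 0 ≤ t → ‖δ₁ t‖ ≤ D) (hδ₂ : ∀ t, 0 ≤ t → ‖δ₂ t‖ ≤ D)
    (hr₁ : ∀ t, 0 ≤ t → ‖r₁ t‖ ≤ R) (hr₂ : ∀ t, 0 ≤ t → ‖r₂ t‖ ≤ R)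
    (hυ : ∀ t, 0 ≤ t → ‖υ t - υ' t‖ ≤ Dυ)
    (hx₁ : ∀ t, 0 ≤ t → HasDerivAt x₁ (x₂ t) t)
    (hx₂ : ∀ t, 0 ≤ t → HasDerivAt x₂
      (δ₁ t - (l₁ + l₂) • x₂ t - (l₁ * l₂) • x₁ t + υ t + r₁ t) t)
    (hy₁ : ∀ t, 0 ≤ t → HasDerivAt y₁ (y₂ t) t)
    (hy₂ : ∀ t, 0 ≤ t → HasDerivAt y₂
      (δ₂ t - (l₁ + l₂) • y₂ t - (l₁ * l₂) • y₁ t + υ' t + r₂ t) t)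
    (W : ℝ → ℝ)
    (hW : W = fun t => (1 / 2) * ‖x₁ t - y₁ t‖ ^ 2
      + (1 / 2) * ‖x₂ t + l₁ • x₁ t - y₂ t - l₁ • y₁ t‖ ^ 2) :
    ∀ t, 0 ≤ t →
      (W t ≤ Real.exp (-κ * t) * W 0 + ((1 / 2) * Dυ ^ 2 + ct) / κ) ∧
      (‖x₁ t - y₁ t‖ ^ 2 + ‖x₂ t - y₂ t‖ ^ 2 ≤
        (1 / μ) * (Real.exp (-κ * t) * W 0 + ((1 / 2) * Dυ ^ 2 + ct) / κ)) := by
  intro t ht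
  have hκ₁ : κ ≤ 2 * (l₁ - 1 / 2) := hκ ▸ mul_le_mul_of_nonneg_left (min_le_left _ _) two_pos.le
  have hκ₂ : κ ≤ 2 * (l₂ - 2 - 1 / (2 * θ)) :=
    hκ ▸ mul_le_mul_of_nonneg_left (min_le_right _ _) two_pos.le
  have hκpos : 0 < κ := hκ ▸ mul_pos two_pos (lt_min (by linarith) (by linarith))
  have hW_deriv : ∀ s, 0 ≤ s →
      ∃ W', HasDerivAt W W' s ∧ W' ≤ -κ * W s + ((1 / 2) * Dυ ^ 2 + ct) := by
    intro s hs
    refine ⟨_, hW ▸ hasDerivAt_lyapunov (hx₁ s hs) (hx₂ s hs) (hy₁ s hs) (hy₂ s hs), ?_⟩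
    have hW'_le := lyapunov_deriv_le hθ l₁ l₂ (x₁ s - y₁ s)
      (x₂ s + l₁ • x₁ s - y₂ s - l₁ • y₁ s) (norm_sub_le_of_le (hδ₁ s hs) (hδ₂ s hs))
      (hυ s hs) (norm_sub_le_of_le (hr₁ s hs) (hr₂ s hs))
    rw [hW, hct]
    nlinarith [mul_le_mul_of_nonneg_right hκ₁ (sq_nonneg ‖x₁ s - y₁ s‖),
      mul_le_mul_of_nonneg_right hκ₂ (sq_nonneg ‖x₂ s + l₁ • x₁ s - y₂ s - l₁ • y₁ s‖)]
  have hdecay :=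
    le_exp_neg_mul_add_div_of_hasDerivAt_le hκpos (by rw [hct]; positivity) hW_deriv ht
  refine ⟨hdecay, ?_⟩
  have hlower : μ * (‖x₁ t - y₁ t‖ ^ 2 + ‖x₂ t - y₂ t‖ ^ 2) ≤ W t := by
    rw [hW]
    convert lyapunovConst_mul_le (by linarith : 0 ≤ l₁) (x₁ t - y₁ t) (x₂ t - y₂ t) using 5
    · exact hμ
    · module
  rw [one_div_mul_eq_div, le_div_iff₀ (hμ ▸ lyapunovConst_pos l₁)]
  linarith

/-- Trajectory-level δ-ISpS conclusion of Theorem 2: exponential decay of the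
Lyapunov function and of the squared distance between the two closed-loop
trajectories, up to the practical offset. -/
theorem deltaISpS_trajectory_estimate
    {E : Type*} [NormedAddCommGroup E] [InnerProductSpace ℝ E]
    (θ l₁ l₂ D R Dυ κ ct μ : ℝ)
    (hθ : 0 < θ) (hl₁ : 1 / 2 < l₁) (hl₂ : 2 + 1 / (2 * θ) < l₂)
    (hD : 0 ≤ D) (hR : 0 ≤ R) (hDυ : 0 ≤ Dυ)
    (hκ : κ = 2 * min (l₁ - 1 / 2) (l₂ - 2 - 1 / (2 * θ)))
    (hct : ct = D ^ 2 + 2 * θ * R ^ 2)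
    (hμ : μ = (2 + l₁ ^ 2 - l₁ * Real.sqrt (l₁ ^ 2 + 4)) / 4)
    (x₁ x₂ y₁ y₂ δ₁ δ₂ r₁ r₂ υ υ' : ℝ → E)
    (hδ₁ : ∀ t, 0 ≤ t → ‖δ₁ t‖ ≤ D) (hδ₂ : ∀ t, 0 ≤ t → ‖δ₂ t‖ ≤ D)
    (hr₁ : ∀ t, 0 ≤ t → ‖r₁ t‖ ≤ R) (hr₂ : ∀ t, 0 ≤ t → ‖r₂ t‖ ≤ R)
    (hυ : ∀ t, 0 ≤ t → ‖υ t - υ' t‖ ≤ Dυ)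
    (hx₁ : ∀ t, 0 ≤ t → HasDerivAt x₁ (x₂ t) t)
    (hx₂ : ∀ t, 0 ≤ t → HasDerivAt x₂
      (δ₁ t - (l₁ + l₂) • x₂ t - (l₁ * l₂) • x₁ t + υ t + r₁ t) t)
    (hy₁ : ∀ t, 0 ≤ t → HasDerivAt y₁ (y₂ t) t)
    (hy₂ : ∀ t, 0 ≤ t → HasDerivAt y₂
      (δ₂ t - (l₁ + l₂) • y₂ t - (l₁ * l₂) • y₁ t + υ' t + r₂ t) t)
    (W : ℝ → ℝ)
    (hW : W = fun t => (1 / 2) * ‖x₁ t - y₁ t‖ ^ 2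
      + (1 / 2) * ‖x₂ t + l₁ • x₁ t - y₂ t - l₁ • y₁ t‖ ^ 2) :
    ∀ t, 0 ≤ t →
      (W t ≤ Real.exp (-κ * t) * W 0 + ((1 / 2) * Dυ ^ 2 + ct) / κ) ∧
      (‖x₁ t - y₁ t‖ ^ 2 + ‖x₂ t - y₂ t‖ ^ 2 ≤
        (1 / μ) * (Real.exp (-κ * t) * W 0 + ((1 / 2) * Dυ ^ 2 + ct) / κ)) :=
  deltaISpS_trajectory_estimate_general θ l₁ l₂ D R Dυ κ ct μ hθ hl₁ hl₂ hκ hct hμ x₁ x₂ y₁ y₂ δ₁ δ₂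
    r₁ r₂ υ υ' hδ₁ hδ₂ hr₁ hr₂ hυ hx₁ hx₂ hy₁ hy₂ W hW
end

section
/- Let E be a real inner product space, let λ₁, λ₂ ∈ ℝ, D ≥ 0, G ≥ 0, κ_h > 0. Let x₁, x₂ : [0,∞) → E be differentiable curves, let h : [0,∞) → ℝ be the (differentiable) barrier value along the trajectory, and let g₁, g₂ : [0,∞) → E represent the gradients of the barrier function along the trajectory with ‖g₂(t)‖ ≤ G and g₂(t) ≠ 0 for all t. Let δ, υ : [0,∞) → E with ‖δ(t)‖ ≤ D for all t. Define φ₀(t) = ⟨g₁(t), x₂(t)⟩ + ⟨g₂(t), −(λ₁ + λ₂)x₂(t) − λ₁λ₂x₁(t)⟩ + κ_h·h(t). Assume for all t ≥ 0: x₁′(t) = x₂(t), x₂′(t) = δ(t) − (λ₁ + λ₂)x₂(t) − λ₁λ₂x₁(t) + υ(t) + max(0, −φ₀(t) − ⟨g₂(t), υ(t)⟩)·g₂(t)/‖g₂(t)‖², and that the chain rule holds: h′(t) = ⟨g₁(t), x₁′(t)⟩ + ⟨g₂(t), x₂′(t)⟩. If h(0) ≥ −D·G/κ_h, then h(t) ≥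 −D·G/κ_h for all t ≥ 0. -/
open scoped RealInnerProductSpace

open Real Set

/- The ReLU term is exactly the correction that makes the barrier constraint
`⟪g₂, x₂'⟫ ≥ ⟪g₂, δ⟫ + ⟪g₂, nominal drift⟫ - φ₀` hold, so the only loss in the barrier
condition comes from the model error, `⟪g₂, δ⟫ ≥ -D G`. Hence `h' ≥ -κ_h h - D G`, and a
comparison argument (the integrating factor `exp (κ_h t)`) keeps `h` above the equilibrium
`-D G / κ_h` of `y' = -κ_h y - D G`. -/

theorem le_image_of_hasDerivAt_ge_neg_mul_sub {f f' : ℝ → ℝ} {a c κ : ℝ}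
    (hf : ∀ t, a ≤ t → HasDerivAt f (f' t) t)
    (hf' : ∀ t, a ≤ t → -κ * (f t - c) ≤ f' t) (ha : c ≤ f a) :
    ∀ t, a ≤ t → c ≤ f t := by
  set w : ℝ → ℝ := fun s => (f s - c) * exp (κ * s)
  have hw : ∀ t, a ≤ t → HasDerivAt w ((f' t + κ * (f t - c)) * exp (κ * t)) t := by
    intro t ht
    have hexp : HasDerivAt (fun s => exp (κ * s)) (exp (κ * t) * κ) t :=
      ((hasDerivAt_id t).const_mul κ).exp.congr_deriv (by simp)
    exact (((hf t ht).sub_const c).mul hexp).congr_deriv (by ring)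
  have hmono : MonotoneOn w (Ici a) := by
    refine monotoneOn_of_hasDerivWithinAt_nonneg (convex_Ici a)
      (f' := fun t => (f' t + κ * (f t - c)) * exp (κ * t))
      (fun t ht => (hw t ht).continuousAt.continuousWithinAt) (fun t ht => ?_) (fun t ht => ?_)
    · rw [interior_Ici] at ht
      exact (hw t ht.le).hasDerivWithinAt
    · rw [interior_Ici] at ht
      exact mul_nonneg (by linarith [hf' t ht.le]) (exp_pos _).le
  intro t ht
  have hwt : 0 ≤ w t := (mul_nonneg (sub_nonneg.mpr ha) (exp_pos _).le).trans
    (hmono self_mem_Ici ht ht)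
  exact sub_nonneg.mp (nonneg_of_mul_nonneg_left hwt (exp_pos _))

section InnerProductSpace

variable {E : Type*} [NormedAddCommGroup E] [InnerProductSpace ℝ E]

theorem le_inner_add_relu_smul {g : E} (hg : g ≠ 0) (u : E) (a : ℝ) :
    a ≤ ⟪g, u + (max 0 (a - ⟪g, u⟫) / ‖g‖ ^ 2) • g⟫ := by
  have hg2 : ‖g‖ ^ 2 ≠ 0 := pow_ne_zero 2 (norm_ne_zero_iff.mpr hg)
  rw [inner_add_right, real_inner_smul_right, real_inner_self_eq_norm_sq,
    div_mul_cancel₀ _ hg2]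
  linarith [le_max_right 0 (a - ⟪g, u⟫)]

theorem neg_mul_le_real_inner_of_norm_le {x y : E} {a b : ℝ} (hx : ‖x‖ ≤ a) (hy : ‖y‖ ≤ b) :
    -(a * b) ≤ ⟪x, y⟫ :=
  calc -(a * b) ≤ -(‖x‖ * ‖y‖) :=
        neg_le_neg (mul_le_mul hx hy (norm_nonneg _) ((norm_nonneg _).trans hx))
    _ ≤ ⟪x, y⟫ := neg_le_of_abs_le (abs_real_inner_le_norm x y)

end InnerProductSpace

theorem cbf_forward_invariance_general
    {E : Type*} [NormedAddCommGroup E] [InnerProductSpace ℝ E]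
    (l₁ l₂ D G κh : ℝ) (hκh : 0 < κh)
    (x₁ x₂ δ υ : ℝ → E) (h : ℝ → ℝ) (g₁ g₂ : ℝ → E)
    (hg₂_bound : ∀ t, 0 ≤ t → ‖g₂ t‖ ≤ G)
    (hg₂_ne : ∀ t, 0 ≤ t → g₂ t ≠ 0)
    (hδ : ∀ t, 0 ≤ t → ‖δ t‖ ≤ D)
    (φ₀ : ℝ → ℝ)
    (hφ₀ : ∀ t, φ₀ t = ⟪g₁ t, x₂ t⟫
      + ⟪g₂ t, -(l₁ + l₂) • x₂ t - (l₁ * l₂) • x₁ t⟫ + κh * h t)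
    (x₁' x₂' : ℝ → E)
    (hx₁'_eq : ∀ t, 0 ≤ t → x₁' t = x₂ t)
    (hx₂'_eq : ∀ t, 0 ≤ t → x₂' t =
      δ t - (l₁ + l₂) • x₂ t - (l₁ * l₂) • x₁ t + υ t
        + (max 0 (-φ₀ t - ⟪g₂ t, υ t⟫) / ‖g₂ t‖ ^ 2) • g₂ t)
    -- the chain rule holds for the barrier value along the trajectory
    (hh_deriv : ∀ t, 0 ≤ t →
      HasDerivAt h (⟪g₁ t, x₁' t⟫ + ⟪g₂ t, x₂' t⟫) t)
    (h_init : h 0 ≥ -(D * G) / κh) :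
    ∀ t, 0 ≤ t → h t ≥ -(D * G) / κh := by
  refine le_image_of_hasDerivAt_ge_neg_mul_sub (κ := κh) hh_deriv (fun t ht => ?_) h_init
  have hsplit : x₂' t = δ t + (-(l₁ + l₂) • x₂ t - (l₁ * l₂) • x₁ t)
      + (υ t + (max 0 (-φ₀ t - ⟪g₂ t, υ t⟫) / ‖g₂ t‖ ^ 2) • g₂ t) := by
    rw [hx₂'_eq t ht, neg_smul]
    abel
  have hfilter := le_inner_add_relu_smul (hg₂_ne t ht) (υ t) (-φ₀ t)
  have herror := neg_mul_le_real_inner_of_norm_le (hδ t ht) (hg₂_bound t ht)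
  have hlinear : -κh * (h t - -(D * G) / κh) = -(κh * h t) - D * G := by
    field_simp
    ring
  rw [hlinear, hx₁'_eq t ht, hsplit, inner_add_right, inner_add_right]
  rw [real_inner_comm] at herror
  linarith [hφ₀ t]

/-- Robust forward invariance (safety) of Theorem 2: along the closed-loop
trajectory with the ReLU safety filter, the barrier value h never drops
below −D·G/κ_h if it starts above it. -/
theorem cbf_forward_invariance
    {E : Type*} [NormedAddCommGroup E] [InnerProductSpace ℝ E]
    (l₁ l₂ D G κh : ℝ) (hD : 0 ≤ D) (hG : 0 ≤ G) (hκh : 0 < κh)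
    (x₁ x₂ δ υ : ℝ → E) (h : ℝ → ℝ) (g₁ g₂ : ℝ → E)
    (hg₂_bound : ∀ t, 0 ≤ t → ‖g₂ t‖ ≤ G)
    (hg₂_ne : ∀ t, 0 ≤ t → g₂ t ≠ 0)
    (hδ : ∀ t, 0 ≤ t → ‖δ t‖ ≤ D)
    (φ₀ : ℝ → ℝ)
    (hφ₀ : ∀ t, φ₀ t = ⟪g₁ t, x₂ t⟫
      + ⟪g₂ t, -(l₁ + l₂) • x₂ t - (l₁ * l₂) • x₁ t⟫ + κh * h t)
    (x₁' x₂' : ℝ → E)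
    (hx₁ : ∀ t, 0 ≤ t → HasDerivAt x₁ (x₁' t) t)
    (hx₂ : ∀ t, 0 ≤ t → HasDerivAt x₂ (x₂' t) t)
    (hx₁'_eq : ∀ t, 0 ≤ t → x₁' t = x₂ t)
    (hx₂'_eq : ∀ t, 0 ≤ t → x₂' t =
      δ t - (l₁ + l₂) • x₂ t - (l₁ * l₂) • x₁ t + υ t
        + (max 0 (-φ₀ t - ⟪g₂ t, υ t⟫) / ‖g₂ t‖ ^ 2) • g₂ t)
    -- the chain rule holds for the barrier value along the trajectory
    (hh_deriv : ∀ t, 0 ≤ t →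
      HasDerivAt h (⟪g₁ t, x₁' t⟫ + ⟪g₂ t, x₂' t⟫) t)
    (h_init : h 0 ≥ -(D * G) / κh) :
    ∀ t, 0 ≤ t → h t ≥ -(D * G) / κh :=
  cbf_forward_invariance_general l₁ l₂ D G κh hκh x₁ x₂ δ υ h g₁ g₂ hg₂_bound hg₂_ne hδ φ₀ hφ₀ x₁'
    x₂' hx₁'_eq hx₂'_eq hh_deriv h_init
end
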